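/- arXiv:2007.07228 — 5 statements merged into one kernel-verified Lean document; each statement's English description precedes it below -/
import Mathlib

section
/- Let W ∈ ℝ^{n×n} be a block matrix satisfying W_{ij} = (γ_i/γ_j) W_{ji}^T for all i, j, where γ_1, ..., γ_N > 0. Then the sum of path weights over all length-k paths from i to j is zero (for all 0 < k < n) if and only if the sum of path weights over all length-k paths from j to i is zero (for all 0 < k < n). -/
open Matrix Finset

/-- The block index type for a partition `n = n 0 + ⋯ + n (N-1)`. -/
abbrev BlkIdx {N : ℕ} (n : Fin N → ℕ) := (p : Fin N) × Fin (n p)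

/-- The `(p,q)` block of `W`, embedded back into the big matrix padded with zeros. -/
def blkPad {N : ℕ} {n : Fin N → ℕ} (W : Matrix (BlkIdx n) (BlkIdx n) ℝ)
    (p q : Fin N) : Matrix (BlkIdx n) (BlkIdx n) ℝ :=
  Matrix.of fun a b => if a.1 = p ∧ b.1 = q then W a b else 0

/-- The weight of the path visiting blocks `v 0, v 1, …, v k`:
`W_{v k, v (k-1)} ⋯ W_{v 1, v 0}` (blocks embedded as zero-padded matrices). -/
def pathWeight {N : ℕ} {n : Fin N → ℕ} (W : Matrix (BlkIdx n) (BlkIdx n) ℝ)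
    (v : ℕ → Fin N) : ℕ → Matrix (BlkIdx n) (BlkIdx n) ℝ
  | 0 => 1
  | k + 1 => blkPad W (v (k + 1)) (v k) * pathWeight W v k

/-- The sum of path weights over all paths of length `k` from block `i` to block `j`. -/
def pathSum {N : ℕ} {n : Fin N → ℕ} (W : Matrix (BlkIdx n) (BlkIdx n) ℝ)
    (i j : Fin N) (k : ℕ) : Matrix (BlkIdx n) (BlkIdx n) ℝ :=
  ∑ v ∈ Finset.univ.filter
      (fun v : Fin (k + 1) → Fin N => v 0 = i ∧ v (Fin.last k) = j),
    pathWeight W (fun l => v ⟨min l k, by omega⟩) k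

section Aux

variable {N : ℕ} {n : Fin N → ℕ}

lemma blkPad_transpose (W : Matrix (BlkIdx n) (BlkIdx n) ℝ) (γ : Fin N → ℝ)
    (hsym : ∀ (p q : Fin N) (a : Fin (n p)) (b : Fin (n q)),
      W ⟨p, a⟩ ⟨q, b⟩ = (γ p / γ q) * W ⟨q, b⟩ ⟨p, a⟩)
    (p q : Fin N) : (blkPad W p q)ᵀ = (γ p / γ q) • blkPad W q p := by
  ext x y
  simp only [transpose_apply, blkPad, of_apply, Matrix.smul_apply, smul_eq_mul]
  by_cases h1 : y.1 = p ∧ x.1 = q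
  · obtain ⟨x1, x2⟩ := x
    obtain ⟨y1, y2⟩ := y
    obtain ⟨h1, h2⟩ := h1
    dsimp at h1 h2
    subst h1; subst h2
    rw [if_pos ⟨rfl, rfl⟩, if_pos ⟨rfl, rfl⟩]
    exact hsym _ _ _ _
  · rw [if_neg h1, if_neg (fun h => h1 ⟨h.2, h.1⟩), mul_zero]

lemma pathWeight_succ' (W : Matrix (BlkIdx n) (BlkIdx n) ℝ) (u : ℕ → Fin N) :
    ∀ k, pathWeight W u (k + 1)
      = pathWeight W (fun l => u (l + 1)) k * blkPad W (u 1) (u 0) := by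
  intro k
  induction k with
  | zero => simp [pathWeight]
  | succ k ih =>
      show blkPad W (u (k + 2)) (u (k + 1)) * pathWeight W u (k + 1) = _
      rw [ih, ← Matrix.mul_assoc]
      rfl

lemma pathWeight_transpose (W : Matrix (BlkIdx n) (BlkIdx n) ℝ) (γ : Fin N → ℝ)
    (hγ : ∀ p, 0 < γ p)
    (hsym : ∀ (p q : Fin N) (a : Fin (n p)) (b : Fin (n q)),
      W ⟨p, a⟩ ⟨q, b⟩ = (γ p / γ q) * W ⟨q, b⟩ ⟨p, a⟩)
    (u : ℕ → Fin N) :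
    ∀ k, (pathWeight W u k)ᵀ
      = (γ (u k) / γ (u 0)) • pathWeight W (fun l => u (k - l)) k := by
  intro k
  induction k with
  | zero =>
      simp [pathWeight, div_self (hγ (u 0)).ne']
  | succ k ih =>
      have hf : (fun l : ℕ => u (k + 1 - (l + 1))) = fun l => u (k - l) := by
        funext l
        congr 1
        omega
      have step : pathWeight W (fun l => u (k + 1 - l)) (k + 1)
          = pathWeight W (fun l => u (k - l)) k * blkPad W (u k) (u (k + 1)) := by
        rw [pathWeight_succ' W (fun l => u (k + 1 - l)) k]
        exact congrArg₂ (· * ·) (congrArg (fun f => pathWeight W f k) hf) (by norm_num)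
      show (blkPad W (u (k + 1)) (u k) * pathWeight W u k)ᵀ = _
      rw [Matrix.transpose_mul, ih, blkPad_transpose W γ hsym, step,
        Matrix.smul_mul, Matrix.mul_smul, smul_smul]
      congr 1
      rw [div_mul_div_comm, mul_comm (γ (u k)) (γ (u (k + 1))),
        mul_div_mul_right _ _ (hγ (u k)).ne']

set_option maxHeartbeats 1000000 in
lemma pathSum_transpose (W : Matrix (BlkIdx n) (BlkIdx n) ℝ) (γ : Fin N → ℝ)
    (hγ : ∀ p, 0 < γ p)
    (hsym : ∀ (p q : Fin N) (a : Fin (n p)) (b : Fin (n q)),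
      W ⟨p, a⟩ ⟨q, b⟩ = (γ p / γ q) * W ⟨q, b⟩ ⟨p, a⟩)
    (i j : Fin N) (k : ℕ) :
    (pathSum W i j k)ᵀ = (γ j / γ i) • pathSum W j i k := by
  unfold pathSum
  rw [Matrix.transpose_sum, Finset.smul_sum]
  refine Finset.sum_equiv
    ⟨fun v l => v l.rev, fun v l => v l.rev,
      fun v => by funext l; simp, fun v => by funext l; simp⟩ ?_ ?_
  · intro v
    simp only [Finset.mem_filter, Finset.mem_univ, true_and, Equiv.coe_fn_mk]
    rw [Fin.rev_zero, Fin.rev_last]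
    tauto
  · intro v hv
    simp only [Finset.mem_filter, Finset.mem_univ, true_and] at hv
    rw [pathWeight_transpose W γ hγ hsym]
    have e0 : v ⟨min 0 k, by omega⟩ = i := by simpa using hv.1
    have ek : v ⟨min k k, by omega⟩ = j := by
      have h : (⟨min k k, by omega⟩ : Fin (k + 1)) = Fin.last k := by
        ext; simp [Fin.last]
      rw [h]; exact hv.2
    rw [e0, ek]
    simp only [Equiv.coe_fn_mk]
    clear e0 ek hv hγ hsym
    have hfun : (fun l : ℕ => v ⟨min (k - l) k, by omega⟩)
        = fun l : ℕ => v (Fin.rev ⟨min l k, by omega⟩) := by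
      funext l
      congr 1
      ext
      rw [Fin.val_rev]
      simp
      omega
    exact congrArg (fun f => (γ j / γ i) • pathWeight W f k) hfun

end Aux

/-- If `W_{ij} = (γ_i/γ_j) W_{ji}ᵀ` for all blocks (with `γ_p > 0`),
then the sum of path weights over all length-`k` paths from `i` to `j` vanishes for
all `0 < k < n` iff the sum over all length-`k` paths from `j` to `i` vanishes for
all `0 < k < n`. -/
theorem stmt5 {N : ℕ} {n : Fin N → ℕ}
    (W : Matrix (BlkIdx n) (BlkIdx n) ℝ) (γ : Fin N → ℝ) (hγ : ∀ p, 0 < γ p)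
    (hsym : ∀ (p q : Fin N) (a : Fin (n p)) (b : Fin (n q)),
      W ⟨p, a⟩ ⟨q, b⟩ = (γ p / γ q) * W ⟨q, b⟩ ⟨p, a⟩)
    (i j : Fin N) :
    (∀ k, 0 < k → k < ∑ p, n p → pathSum W i j k = 0)
    ↔ (∀ k, 0 < k → k < ∑ p, n p → pathSum W j i k = 0) := by
  have key : ∀ a b : Fin N, ∀ k : ℕ, pathSum W b a k = 0 → pathSum W a b k = 0 := by
    intro a b k h
    have := pathSum_transpose W γ hγ hsym a b k
    rw [h, smul_zero] at this
    exact Matrix.transpose_eq_zero.mp this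
  exact ⟨fun h k h1 h2 => key _ _ _ (h k h1 h2), fun h k h1 h2 => key _ _ _ (h k h1 h2)⟩
end

section
/- Let A ∈ ℝ^{n_1×n_2}, B ∈ ℝ^{n_2×n_1}, γ_1, γ_2 > 0, and W_s = [[I, −γ_1 A], [−γ_2 B, I]] ∈ ℝ^{(n_1+n_2)×(n_1+n_2)}. If for indices i ≠ j in {1,...,n_1}, (W_s^k)_{j,i} = 0 for all 1 ≤ k < n_1 + n_2 (entries indexed within the first block), then ∑_{ℓ=1}^{n_2} B_{ℓ i} A_{j ℓ} = 0, i.e., (AB)_{ji} = 0. -/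
open Matrix

/-- For simultaneous gradient play on the two-player bilinear game,
`W_s = [[I, −γ₁A], [−γ₂B, I]]`: if for `i ≠ j` in the first block the `(j,i)` entry
of `W_s^k` vanishes for all `1 ≤ k < n₁ + n₂`, then `(AB)_{ji} = 0`, i.e.,
`∑_ℓ B_{ℓi} A_{jℓ} = 0`. -/
theorem stmt11 {n₁ n₂ : ℕ}
    (A : Matrix (Fin n₁) (Fin n₂) ℝ) (B : Matrix (Fin n₂) (Fin n₁) ℝ)
    (γ₁ γ₂ : ℝ) (hγ₁ : 0 < γ₁) (hγ₂ : 0 < γ₂)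
    (Ws : Matrix (Fin n₁ ⊕ Fin n₂) (Fin n₁ ⊕ Fin n₂) ℝ)
    (hWs : Ws = Matrix.fromBlocks 1 (-(γ₁ • A)) (-(γ₂ • B)) 1)
    (i j : Fin n₁) (hij : i ≠ j)
    (h : ∀ k : ℕ, 1 ≤ k → k < n₁ + n₂ → (Ws ^ k) (Sum.inl j) (Sum.inl i) = 0) :
    (A * B) j i = 0 := by
  rcases Nat.eq_zero_or_pos n₂ with h0 | hpos
  · subst h0
    simp [Matrix.mul_apply]
  · have hn₁ : 2 ≤ n₁ := by
      by_contra hlt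
      push_neg at hlt
      interval_cases n₁ <;> [exact i.elim0; exact hij (Subsingleton.elim i j)]
    have h2 := h 2 (by norm_num) (by omega)
    have hsq : Ws ^ 2 = Ws * Ws := sq Ws
    rw [hsq, hWs, Matrix.fromBlocks_multiply] at h2
    simp only [Matrix.fromBlocks_apply₁₁, Matrix.one_mul, Matrix.neg_mul,
      Matrix.mul_neg, neg_neg, Matrix.smul_mul, Matrix.mul_smul, Matrix.add_apply,
      Matrix.smul_apply, Matrix.neg_apply, smul_eq_mul, Matrix.one_apply_ne (Ne.symm hij), zero_add] at h2
    have h2' : γ₁ * (γ₂ * (A * B) j i) = 0 := by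
      rw [← h2]; ring_nf
    rcases mul_eq_zero.mp h2' with h' | h'
    · exact absurd h' (ne_of_gt hγ₁)
    rcases mul_eq_zero.mp h' with h'' | h''
    · exact absurd h'' (ne_of_gt hγ₂)
    exact h''
end

section
/- Let A ∈ ℝ^{n_1×n_2}, B ∈ ℝ^{n_2×n_1}, and W_s = [[I, −γ_1 A], [−γ_2 B, I]] with γ_1, γ_2 > 0. If coordinate x_{2,j} is disturbance decoupled from coordinate x_{1,i} under the dynamics z^{k+1} = W_s z^k (meaning (W_s^k)_{(n_1+j), i} = 0 for all 1 ≤ k < n_1+n_2), then B_{ji} = 0 and (BAB)_{ji} = 0. -/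
open Matrix

/-- For simultaneous gradient play `W_s = [[I, −γ₁A], [−γ₂B, I]]`:
if coordinate `x_{2,j}` is disturbance decoupled from coordinate `x_{1,i}`, i.e.
the `(n₁+j, i)` entry of `W_s^k` vanishes for all `1 ≤ k < n₁ + n₂`, then
`B_{ji} = 0` and `(BAB)_{ji} = 0`. -/
theorem stmt13 {n₁ n₂ : ℕ}
    (A : Matrix (Fin n₁) (Fin n₂) ℝ) (B : Matrix (Fin n₂) (Fin n₁) ℝ)
    (γ₁ γ₂ : ℝ) (hγ₁ : 0 < γ₁) (hγ₂ : 0 < γ₂)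
    (Ws : Matrix (Fin n₁ ⊕ Fin n₂) (Fin n₁ ⊕ Fin n₂) ℝ)
    (hWs : Ws = Matrix.fromBlocks 1 (-(γ₁ • A)) (-(γ₂ • B)) 1)
    (i : Fin n₁) (j : Fin n₂)
    (h : ∀ k : ℕ, 1 ≤ k → k < n₁ + n₂ → (Ws ^ k) (Sum.inr j) (Sum.inl i) = 0) :
    B j i = 0 ∧ (B * A * B) j i = 0 := by
  have hn₁ : 0 < n₁ := i.pos
  have hn₂ : 0 < n₂ := j.pos
  have h1 := h 1 le_rfl (by omega)
  rw [pow_one, hWs, fromBlocks_apply₂₁] at h1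
  have hB : B j i = 0 := by
    simp only [Matrix.neg_apply, Matrix.smul_apply, smul_eq_mul, neg_eq_zero] at h1
    exact (mul_eq_zero.1 h1).resolve_left hγ₂.ne'
  refine ⟨hB, ?_⟩
  by_cases hcase : 2 ≤ n₁ ∧ 2 ≤ n₂
  · -- use k = 3
    have h3 := h 3 (by omega) (by omega)
    have key : (Ws ^ 3) (Sum.inr j) (Sum.inl i)
        = -(3 * γ₂) * B j i - γ₁ * γ₂ ^ 2 * (B * A * B) j i := by
      subst hWs
      rw [pow_succ, pow_succ, pow_one, fromBlocks_multiply, fromBlocks_multiply,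
        fromBlocks_apply₂₁]
      simp only [Matrix.mul_one, Matrix.one_mul, Matrix.neg_mul, Matrix.mul_neg,
        Matrix.smul_mul, Matrix.mul_smul, neg_neg, smul_smul, Matrix.add_mul,
        Matrix.add_apply, Matrix.neg_apply, Matrix.smul_apply, smul_eq_mul,
        Matrix.mul_apply]
      ring_nf
    rw [key, hB] at h3
    have hne : γ₁ * γ₂ ^ 2 ≠ 0 := by positivity
    have h3' : γ₁ * γ₂ ^ 2 * (B * A * B) j i = 0 := by linarith
    exact (mul_eq_zero.1 h3').resolve_left hne
  · -- n₁ = 1 or n₂ = 1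
    rcases not_and_or.1 hcase with hn | hn
    · have hone : n₁ = 1 := by omega
      have hq : ∀ q : Fin n₁, B j q = 0 := by
        intro q
        haveI : Subsingleton (Fin n₁) := by rw [hone]; infer_instance
        rw [Subsingleton.elim q i]; exact hB
      simp [Matrix.mul_apply, hq]
    · have hone : n₂ = 1 := by omega
      have hl : ∀ l : Fin n₂, B l i = 0 := by
        intro l
        haveI : Subsingleton (Fin n₂) := by rw [hone]; infer_instance
        rw [Subsingleton.elim l j]; exact hB
      simp [Matrix.mul_apply, hl]
end

section
/- Let W ∈ ℝ^{n×n} be a block matrix and suppose that for players i ≠ j the blockwise path-weight condition holds: ∑_{p ∈ P^k_{ij}} ∏ W_{v_{l+1},v_l} = 0 for all 0 < k < n. Then for the disturbed dynamics y^{k+1} = W y^k − c − d^k with d^k supported on block i, and undisturbed dynamics x^{k+1} = W x^k − c with x^0 = y^0, the block-j components satisfy y^k_j = x^k_j for all k ≥ 0, for every choice of disturbance sequence d^k and every initial condition. -/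
open Matrix Finset

/-! Summing the path weights over all intermediate blocks recovers the `(j, i)` block of `W ^ k`,
so the hypothesis (together with `i ≠ j` for `k = 0`) kills that block for `k < n`, and by
Cayley–Hamilton every power of `W` is a combination of `W ^ 0, …, W ^ (n - 1)`; hence the
`(j, i)` block of every power of `W` vanishes. The error `e = y - x` satisfies
`e (k + 1) = W e k - d k` with `e 0 = 0`, so it is a combination of the vectors `W ^ m d l`,
whose block `j` only sees the `(j, i)` block of `W ^ m`. -/

namespace Matrix

variable {R ι : Type*} [CommRing R] [Fintype ι] [DecidableEq ι]

theorem pow_apply_eq_zero_of_lt_card [Nontrivial R] (A : Matrix ι ι R) (a b : ι)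
    (h : ∀ m < Fintype.card ι, (A ^ m) a b = 0) (m : ℕ) : (A ^ m) a b = 0 := by
  have hcard : 0 < Fintype.card ι := Fintype.card_pos_iff.mpr ⟨a⟩
  have hdeg : (Polynomial.X ^ m %ₘ A.charpoly).natDegree < Fintype.card ι := by
    have hne : A.charpoly ≠ 1 := fun h1 => by
      simpa [h1, hcard.ne] using A.charpoly_natDegree_eq_dim
    simpa [A.charpoly_natDegree_eq_dim] using
      Polynomial.natDegree_modByMonic_lt _ A.charpoly_monic hne
  rw [pow_eq_aeval_mod_charpoly, Polynomial.aeval_eq_sum_range' hdeg, sum_apply]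
  exact Finset.sum_eq_zero fun l hl => by
    rw [smul_apply, h l (Finset.mem_range.mp hl), smul_zero]

theorem pow_mulVec_apply_eq_zero_of_eq_mulVec_sub (A : Matrix ι ι R) (a : ι)
    (e f : ℕ → ι → R) (he0 : e 0 = 0) (he : ∀ k, e (k + 1) = A *ᵥ e k - f k)
    (hf : ∀ k m, (A ^ m *ᵥ f k) a = 0) (k m : ℕ) : (A ^ m *ᵥ e k) a = 0 := by
  induction k generalizing m with
  | zero => simp [he0]
  | succ k ih =>
    rw [he, mulVec_sub, mulVec_mulVec, ← pow_succ, Pi.sub_apply, ih, hf, sub_zero]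

end Matrix

section Paths

variable {N : ℕ} {n : Fin N → ℕ} (W : Matrix (BlkIdx n) (BlkIdx n) ℝ)

theorem pathWeight_congr {v w : ℕ → Fin N} {k : ℕ} (h : ∀ l ≤ k, v l = w l) :
    pathWeight W v k = pathWeight W w k := by
  induction k with
  | zero => rfl
  | succ k ih =>
    rw [pathWeight, pathWeight, h (k + 1) le_rfl, h k (by omega), ih fun l hl => h l (by omega)]

theorem pathWeight_snoc (k : ℕ) (u : Fin (k + 1) → Fin N) (r : Fin N) :
    pathWeight W (fun l => (Fin.snoc u r : Fin (k + 2) → Fin N) ⟨min l (k + 1), by omega⟩) (k + 1)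
      = blkPad W r (u (Fin.last k)) * pathWeight W (fun l => u ⟨min l k, by omega⟩) k := by
  have hcast : ∀ l ≤ k,
      (⟨min l (k + 1), by omega⟩ : Fin (k + 2)) = Fin.castSucc ⟨min l k, by omega⟩ :=
    fun l hl => Fin.ext (by simp; omega)
  rw [pathWeight, pathWeight_congr W fun l hl => by rw [hcast l hl, Fin.snoc_castSucc]]
  congr 2
  · rw [show (⟨min (k + 1) (k + 1), _⟩ : Fin (k + 2)) = Fin.last (k + 1) from Fin.ext (by simp),
      Fin.snoc_last]
  · rw [hcast k le_rfl, Fin.snoc_castSucc]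
    exact congrArg u (Fin.ext (by simp))

theorem pathSum_succ (q p : Fin N) (k : ℕ) :
    pathSum W q p (k + 1) = ∑ r, blkPad W p r * pathSum W q r k := by
  have hlhs : pathSum W q p (k + 1) = ∑ u ∈ univ.filter (fun u : Fin (k + 1) → Fin N => u 0 = q),
      blkPad W p (u (Fin.last k)) * pathWeight W (fun l => u ⟨min l k, by omega⟩) k := by
    rw [pathSum, Finset.sum_filter, ← (Fin.snocEquiv fun _ => Fin N).sum_comp,
      Fintype.sum_prod_type, Finset.sum_comm, Finset.sum_filter]
    refine Finset.sum_congr rfl fun u _ => ?_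
    simp only [Fin.snocEquiv_apply, pathWeight_snoc, Fin.snoc_last]
    have hfirst : ∀ r, (Fin.snoc u r : Fin (k + 2) → Fin N) 0 = u 0 :=
      fun r => Fin.snoc_castSucc (α := fun _ => Fin N) (i := 0) r u
    simp [hfirst, ite_and]
  rw [hlhs]
  simp only [pathSum, Finset.mul_sum, ← Finset.filter_filter]
  rw [← Finset.sum_fiberwise _ (fun u => u (Fin.last k))]
  refine Finset.sum_congr rfl fun r _ => Finset.sum_congr rfl fun u hu => ?_
  rw [(Finset.mem_filter.mp hu).2]

theorem pathSum_zero (q p : Fin N) : pathSum W q p 0 = if q = p then 1 else 0 := by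
  rw [pathSum, Finset.sum_filter, ← (Equiv.funUnique (Fin 1) (Fin N)).symm.sum_comp]
  simp [pathWeight, ite_and]

theorem pathSum_apply (k : ℕ) (a b : BlkIdx n) : pathSum W b.1 a.1 k a b = (W ^ k) a b := by
  induction k generalizing a with
  | zero =>
    rw [pathSum_zero, pow_zero]
    split_ifs with h
    · rfl
    · exact (one_apply_ne fun hab => h (congrArg Sigma.fst hab.symm)).symm
  | succ k ih =>
    have hblk : ∀ c : BlkIdx n, ∑ r, blkPad W a.1 r a c * pathSum W b.1 r k c b
        = W a c * (W ^ k) c b := fun c => by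
      rw [Finset.sum_eq_single c.1 (fun r _ hr => by simp [blkPad, Ne.symm hr]) (by simp), ih]
      simp [blkPad]
    simp only [pathSum_succ, Matrix.sum_apply, mul_apply]
    rw [Finset.sum_comm, pow_succ', mul_apply]
    exact Finset.sum_congr rfl fun c _ => hblk c

theorem pow_apply_eq_zero_of_pathSum_eq_zero {i j : Fin N} (hij : i ≠ j)
    (hpath : ∀ k, 0 < k → k < ∑ p, n p → pathSum W i j k = 0) (m : ℕ) {a b : BlkIdx n}
    (ha : a.1 = j) (hb : b.1 = i) : (W ^ m) a b = 0 := by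
  subst ha hb
  refine Matrix.pow_apply_eq_zero_of_lt_card W a b (fun m hm => ?_) m
  rw [← pathSum_apply]
  rcases Nat.eq_zero_or_pos m with rfl | hm0
  · rw [pathSum_zero, if_neg hij]
    rfl
  · rw [hpath m hm0 (by simpa using hm)]
    rfl

end Paths

/-- If for players `i ≠ j` the path-weight sums from `i` to `j` vanish
for all lengths `0 < k < n`, then for the disturbed dynamics
`y^{k+1} = W y^k − c − d^k` with `d^k` supported on block `i`, and undisturbed
dynamics `x^{k+1} = W x^k − c` with `x⁰ = y⁰`, the block-`j` components satisfy
`y^k_j = x^k_j` for all `k ≥ 0`, for every disturbance sequence and initial condition. -/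
theorem stmt18 {N : ℕ} {n : Fin N → ℕ}
    (W : Matrix (BlkIdx n) (BlkIdx n) ℝ) (i j : Fin N) (hij : i ≠ j)
    (hpath : ∀ k, 0 < k → k < ∑ p, n p → pathSum W i j k = 0)
    (c : BlkIdx n → ℝ) (d : ℕ → BlkIdx n → ℝ)
    (hd : ∀ k, ∀ a : BlkIdx n, a.1 ≠ i → d k a = 0)
    (x y : ℕ → BlkIdx n → ℝ)
    (hx : ∀ k, x (k + 1) = W *ᵥ x k - c)
    (hy : ∀ k, y (k + 1) = W *ᵥ y k - c - d k)
    (h0 : y 0 = x 0) :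
    ∀ k : ℕ, ∀ a : BlkIdx n, a.1 = j → y k a = x k a := by
  intro k a ha
  have hdist : ∀ l m, (W ^ m *ᵥ d l) a = 0 := fun l m => Finset.sum_eq_zero fun b _ => by
    by_cases hb : b.1 = i
    · exact mul_eq_zero_of_left (pow_apply_eq_zero_of_pathSum_eq_zero W hij hpath m ha hb) _
    · exact mul_eq_zero_of_right _ (hd l b hb)
  have herr := Matrix.pow_mulVec_apply_eq_zero_of_eq_mulVec_sub W a (y - x) d
    (by rw [Pi.sub_apply, h0, sub_self])
    (fun l => by rw [Pi.sub_apply, Pi.sub_apply, hy, hx, Matrix.mulVec_sub]; abel)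
    hdist k 0
  simpa [sub_eq_zero] using herr
end

section
/- Let W ∈ ℝ^{4×4} (block scalar) with W_{21} = W_{31} = W_{42} = α and W_{43} = −α for some α ∈ ℝ, diagonal entries W_{11} = W_{44} = w_1, W_{22} = W_{33} = w_2, and all other entries zero. Then (W^k)_{41} = 0 for all k ≥ 1, i.e., player 4 is disturbance decoupled from player 1. -/
open Matrix

/-- Nodes `0, 1, 2, 3` are players `1, 2, 3, 4`: two parallel channels `0 → 1 → 3` and `0 → 2 → 3`
with opposite last-step weights `d`, `-d` and equal self-loops `c` on the intermediate nodes. -/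
def tugOfWar {R : Type*} [Ring R] (a b c d e : R) : Matrix (Fin 4) (Fin 4) R :=
  !![a, 0, 0, 0; b, c, 0, 0; b, 0, c, 0; 0, d, -d, e]

section TugOfWar

variable {R : Type*} [Ring R] (a b c d e : R)

/-- The two channels carry equal weight at every length, so their contributions to node `3` cancel. -/
theorem tugOfWar_pow_one_zero_eq_and_pow_three_zero (k : ℕ) :
    (tugOfWar a b c d e ^ k) 1 0 = (tugOfWar a b c d e ^ k) 2 0 ∧
      (tugOfWar a b c d e ^ k) 3 0 = 0 := by
  induction k with
  | zero => simp [one_apply]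
  | succ k ih =>
    obtain ⟨h₁₂, h₃⟩ := ih
    simp only [pow_succ', mul_apply, Fin.sum_univ_four, h₁₂, h₃]
    simp [tugOfWar]

theorem tugOfWar_pow_three_zero (k : ℕ) : (tugOfWar a b c d e ^ k) 3 0 = 0 :=
  (tugOfWar_pow_one_zero_eq_and_pow_three_zero a b c d e k).2

end TugOfWar

/-- For the 4×4 matrix `W` with `W₂₁ = W₃₁ = W₄₂ = α`, `W₄₃ = −α`,
`W₁₁ = W₄₄ = w₁`, `W₂₂ = W₃₃ = w₂`, and all other entries zero, `(W^k)₄₁ = 0` for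
all `k ≥ 1`: player 4 is disturbance decoupled from player 1. -/
theorem stmt19 (w₁ w₂ α : ℝ)
    (W : Matrix (Fin 4) (Fin 4) ℝ)
    (hW : W = !![w₁, 0, 0, 0; α, w₂, 0, 0; α, 0, w₂, 0; 0, α, -α, w₁]) :
    ∀ k : ℕ, 1 ≤ k → (W ^ k) 3 0 = 0 := by
  subst hW
  exact fun k _ => tugOfWar_pow_three_zero w₁ α w₂ α w₁ k
end
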